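/- arXiv:2202.06230 — 2 statements merged into one kernel-verified Lean document; each statement's English description precedes it below -/
import Mathlib

section
/- Let k ≥ 2 be an integer and let a, d, r, m be positive integers with 2r+1 = a·d, a odd, a ≥ 5, a not dividing m, d ≤ 2k−1, and m < 4kr. Suppose that ⌊2m/a⌋ ≥ ⌈d·m/(r+1)⌉ and ⌊(a−2)m/a⌋ ≥ ⌈(r−d)·m/r⌉. Then r ≤ 8k². -/
/-!
If `r > 8k²` then `d m < (2k - 1) · 4k r < r (r + 1)`, so
`d m / (r + 1) + (r - d) m / r = m - d m / (r (r + 1)) > m - 1` and the two ceilings sum to at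
least `m`. On the other side `2m/a + (a - 2)m/a = m` with `2m/a` not an integer (as `a` is odd
and `a ∤ m`), so the two floors sum to `m - 1`; the hypotheses then give `m ≤ m - 1`.
-/

theorem Int.floor_add_floor_of_add_eq_intCast {R : Type*} [Ring R] [LinearOrder R]
    [IsStrictOrderedRing R] [FloorRing R] {x y : R} {n : ℤ} (hxy : x + y = n)
    (hx : x ∉ Set.range Int.cast) : ⌊x⌋ + ⌊y⌋ = n - 1 := by
  rw [eq_sub_of_add_eq' hxy, sub_eq_add_neg, Int.floor_intCast_add, Int.floor_neg,
    (Int.ceil_eq_floor_add_one_iff_notMem x).mpr hx]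
  ring

theorem two_mul_div_notMem_range_intCast {a m : ℕ} (ha : Odd a) (hm : ¬ a ∣ m) :
    2 * (m : ℚ) / a ∉ Set.range Int.cast := by
  rintro ⟨z, hz⟩
  have ha0 : (a : ℚ) ≠ 0 := by exact_mod_cast ha.pos.ne'
  have hdvd : (a : ℤ) ∣ ((2 * m : ℕ) : ℤ) :=
    ⟨z, by exact_mod_cast (by rw [hz]; field_simp : (2 * m : ℚ) = a * z)⟩
  exact hm ((Nat.coprime_two_right.mpr ha).dvd_of_dvd_mul_left (Int.natCast_dvd_natCast.mp hdvd))

theorem floor_two_mul_div_add_floor_sub_two_mul_div {a m : ℕ} (ha : Odd a) (hm : ¬ a ∣ m) :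
    ⌊(2 * (m : ℚ)) / a⌋ + ⌊(((a : ℚ) - 2) * m) / a⌋ = m - 1 := by
  have ha0 : (a : ℚ) ≠ 0 := by exact_mod_cast ha.pos.ne'
  refine Int.floor_add_floor_of_add_eq_intCast ?_ (two_mul_div_notMem_range_intCast ha hm)
  field_simp
  push_cast
  ring

theorem le_ceil_add_ceil_of_mul_lt {d m r : ℕ} (hr : 0 < r) (hdm : d * m < r * (r + 1)) :
    (m : ℤ) ≤ ⌈((d : ℚ) * m) / (r + 1)⌉ + ⌈(((r : ℚ) - d) * m) / r⌉ := by
  have hsum : ((d : ℚ) * m) / (r + 1) + (((r : ℚ) - d) * m) / r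
      = m - ((d : ℚ) * m) / (r * (r + 1)) := by
    field_simp
    ring
  have hsmall : ((d : ℚ) * m) / (r * (r + 1)) < 1 := by
    rw [div_lt_one (by positivity)]
    exact_mod_cast hdm
  refine le_trans ?_ (Int.ceil_add_le _ _)
  rw [Int.le_ceil_iff, hsum]
  push_cast
  linarith

theorem mul_lt_mul_add_one_of_eight_sq_lt {k d m r : ℕ} (hdk : d ≤ 2 * k - 1)
    (hmr : m < 4 * k * r) (hr : 8 * k ^ 2 < r) : d * m < r * (r + 1) :=
  calc d * m ≤ (2 * k - 1) * (4 * k * r) := Nat.mul_le_mul hdk hmr.le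
    _ ≤ 2 * k * (4 * k * r) := Nat.mul_le_mul_right _ (Nat.sub_le _ _)
    _ = 8 * k ^ 2 * r := by ring
    _ < (r + 1) * r := Nat.mul_lt_mul_of_pos_right (by omega) (by omega)
    _ = r * (r + 1) := Nat.mul_comm _ _

theorem stmt_6_general (k a d r m : ℕ) (hodd : Odd a)
    (hnd : ¬ a ∣ m) (hdk : d ≤ 2 * k - 1) (hmr : m < 4 * k * r)
    (h1 : ⌊(2 * (m : ℚ)) / a⌋ ≥ ⌈((d : ℚ) * m) / (r + 1)⌉)
    (h2 : ⌊(((a : ℚ) - 2) * m) / a⌋ ≥ ⌈(((r : ℚ) - d) * m) / r⌉) :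
    r ≤ 8 * k ^ 2 := by
  by_contra! hr
  have hfloors := floor_two_mul_div_add_floor_sub_two_mul_div hodd hnd
  have hceils := le_ceil_add_ceil_of_mul_lt (by omega)
    (mul_lt_mul_add_one_of_eight_sq_lt hdk hmr hr)
  omega

theorem stmt_6 (k a d r m : ℕ) (hk : 2 ≤ k) (ha : 0 < a) (hd : 0 < d)
    (hr : 0 < r) (hm : 0 < m) (hrel : 2 * r + 1 = a * d) (hodd : Odd a)
    (ha5 : 5 ≤ a) (hnd : ¬ a ∣ m) (hdk : d ≤ 2 * k - 1) (hmr : m < 4 * k * r)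
    (h1 : ⌊(2 * (m : ℚ)) / a⌋ ≥ ⌈((d : ℚ) * m) / (r + 1)⌉)
    (h2 : ⌊(((a : ℚ) - 2) * m) / a⌋ ≥ ⌈(((r : ℚ) - d) * m) / r⌉) :
    r ≤ 8 * k ^ 2 :=
  stmt_6_general k a d r m hodd hnd hdk hmr h1 h2
end

section
/- Let k ≥ 2 be an integer and let a, d, r, m be positive integers with r+2 = a·(2d+1), a ≥ 5, a not dividing m, 2d+1 ≤ k−1, and m < 4kr. Suppose that ⌊m/a⌋ ≥ ⌈(2d+1)·m/(r+4)⌉ and ⌊(a−1)m/a⌋ ≥ ⌈(r−2d−1)·m/r⌉. Then r ≤ 16k² − 4. -/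
/-!
Put `c = 2d + 1`. The two ceilings bound numbers whose sum is
`c m / (r + 4) + (r - c) m / r = m - 4 c m / (r (r + 4))`, while the two floors bound
numbers summing to `m`, the first of which is not an integer because `a ∤ m`.
If `r > 16 k² - 4`, then `4 c m ≤ 4 k m < 16 k² r < r (r + 4)`, so the ceilings sum to at
least `m` while the floors sum to at most `m - 1`.
-/

open Int

section FloorCeil

variable {α : Type*} [Ring α] [LinearOrder α] [IsStrictOrderedRing α] [FloorRing α]

theorem Int.le_ceil_add_ceil_of_sub_one_lt {x y : α} {n : ℤ} (h : (n : α) - 1 < x + y) :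
    n ≤ ⌈x⌉ + ⌈y⌉ :=
  (Int.le_ceil_iff.mpr h).trans (Int.ceil_add_le x y)

theorem Int.floor_add_floor_lt_of_fract_pos {x y : α} {n : ℤ} (hxy : x + y = n)
    (hx : 0 < fract x) : ⌊x⌋ + ⌊y⌋ < n := by
  have hsum : ((⌊x⌋ + ⌊y⌋ : ℤ) : α) < n :=
    calc ((⌊x⌋ + ⌊y⌋ : ℤ) : α) = x - fract x + ⌊y⌋ := by rw [cast_add, self_sub_fract]
      _ < x + y := add_lt_add_of_lt_of_le (sub_lt_self x hx) (floor_le y)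
      _ = n := hxy
  exact_mod_cast hsum

variable {K : Type*} [Field K] [LinearOrder K] [IsStrictOrderedRing K] [FloorRing K]

theorem Int.fract_natCast_div_pos {m a : ℕ} (ha : 0 < a) (hnd : ¬ a ∣ m) :
    0 < fract ((m : K) / a) := by
  rw [fract_div_natCast_eq_div_natCast_mod]
  have hmod : 0 < m % a := Nat.pos_of_ne_zero fun h => hnd (Nat.dvd_of_mod_eq_zero h)
  positivity

theorem Int.floor_natCast_div_add_floor_lt {m a : ℕ} (ha : 0 < a) (hnd : ¬ a ∣ m) :
    ⌊(m : K) / a⌋ + ⌊((a : K) - 1) * m / a⌋ < m := by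
  refine floor_add_floor_lt_of_fract_pos ?_ (fract_natCast_div_pos ha hnd)
  push_cast
  field_simp
  ring

end FloorCeil

theorem div_add_div_eq_sub {α : Type*} [Field α] {c m r : α} (hr : r ≠ 0) (hr4 : r + 4 ≠ 0) :
    c * m / (r + 4) + (r - c) * m / r = m - 4 * c * m / (r * (r + 4)) := by
  field_simp
  ring

theorem sub_one_lt_div_add_div {α : Type*} [Field α] [LinearOrder α] [IsStrictOrderedRing α]
    {c m r : α} (hr : 0 < r) (h : 4 * c * m < r * (r + 4)) :
    m - 1 < c * m / (r + 4) + (r - c) * m / r := by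
  have hsmall : 4 * c * m / (r * (r + 4)) < 1 := by
    rw [div_lt_one (by positivity)]
    exact h
  rw [div_add_div_eq_sub hr.ne' (by positivity)]
  linarith

theorem four_mul_mul_lt_mul_add_four {c k m r : ℕ} (hc : c ≤ k) (hm : m < 4 * k * r)
    (hr : 16 * k ^ 2 ≤ r + 4) : 4 * c * m < r * (r + 4) :=
  calc 4 * c * m ≤ 4 * k * m := by gcongr
    _ < 4 * k * (4 * k * r) := by
      have hk : 0 < k := Nat.pos_of_ne_zero (by rintro rfl; simp at hm)
      gcongr
    _ = 16 * k ^ 2 * r := by ring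
    _ ≤ (r + 4) * r := by gcongr
    _ = r * (r + 4) := mul_comm _ _

theorem stmt_7_general (k a d r m : ℕ) (ha : 0 < a) (hr : 0 < r)
    (hnd : ¬ a ∣ m) (hdk : 2 * d + 1 ≤ k - 1) (hmr : m < 4 * k * r)
    (h1 : ⌊(m : ℚ) / a⌋ ≥ ⌈((2 * (d : ℚ) + 1) * m) / (r + 4)⌉)
    (h2 : ⌊(((a : ℚ) - 1) * m) / a⌋ ≥ ⌈(((r : ℚ) - 2 * d - 1) * m) / r⌉) :
    r ≤ 16 * k ^ 2 - 4 := by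
  by_contra! hlarge
  have hkey : 4 * (2 * d + 1) * m < r * (r + 4) :=
    four_mul_mul_lt_mul_add_four (by omega) hmr (by omega)
  have hceil : (m : ℤ) ≤
      ⌈((2 * (d : ℚ) + 1) * m) / (r + 4)⌉ + ⌈(((r : ℚ) - 2 * d - 1) * m) / r⌉ := by
    apply le_ceil_add_ceil_of_sub_one_lt
    rw [sub_sub]
    have hkeyQ : 4 * (2 * (d : ℚ) + 1) * m < r * (r + 4) := by exact_mod_cast hkey
    simpa using sub_one_lt_div_add_div (by exact_mod_cast hr) hkeyQ
  have hfloor := floor_natCast_div_add_floor_lt (K := ℚ) ha hnd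
  omega

theorem stmt_7 (k a d r m : ℕ) (hk : 2 ≤ k) (ha : 0 < a) (hd : 0 < d)
    (hr : 0 < r) (hm : 0 < m) (hrel : r + 2 = a * (2 * d + 1))
    (ha5 : 5 ≤ a) (hnd : ¬ a ∣ m) (hdk : 2 * d + 1 ≤ k - 1) (hmr : m < 4 * k * r)
    (h1 : ⌊(m : ℚ) / a⌋ ≥ ⌈((2 * (d : ℚ) + 1) * m) / (r + 4)⌉)
    (h2 : ⌊(((a : ℚ) - 1) * m) / a⌋ ≥ ⌈(((r : ℚ) - 2 * d - 1) * m) / r⌉) :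
    r ≤ 16 * k ^ 2 - 4 :=
  stmt_7_general k a d r m ha hr hnd hdk hmr h1 h2
end
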